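/- arXiv:2212.04880 — 2 statements merged into one kernel-verified Lean document; each statement's English description precedes it below -/
import Mathlib

section
/- Let G be a connected chordal graph. If K and K' are two maximal cliques of G lying in the same connected component of C(G) after deleting all edges of minimum weight (i.e., in the same unit), and K and K' are adjacent in C(G), then the weight |K∩K'| of the edge KK' is strictly greater than the minimum edge weight of C(G). -/
open SimpleGraph

attribute [local instance] Classical.propDecidable
set_option linter.unusedSectionVars false

variable {V : Type*} [Fintype V] [DecidableEq V]

/-- A graph is chordal if it has no induced cycle of length at least 4. -/
def IsChordal (G : SimpleGraph V) : Prop :=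
  ∀ n : ℕ, 4 ≤ n →
    ¬ ∃ f : Fin n ↪ V, ∀ i j, (cycleGraph n).Adj i j ↔ G.Adj (f i) (f j)

/-- `K` is a maximal clique of `G`. -/
def MaxClique (G : SimpleGraph V) (K : Finset V) : Prop :=
  G.IsClique (K : Set V) ∧ ∀ K' : Finset V, G.IsClique (K' : Set V) → K ⊆ K' → K = K'

/-- The type of maximal cliques of `G`. -/
abbrev CV (G : SimpleGraph V) := {K : Finset V // MaxClique G K}

/-- `S` is a `u`-`v` separator of `G`: `u, v ∉ S` and every `u`-`v` walk meets `S`. -/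
def Separates (G : SimpleGraph V) (S : Finset V) (u v : V) : Prop :=
  u ∉ S ∧ v ∉ S ∧ ∀ p : G.Walk u v, ∃ x ∈ p.support, x ∈ S

lemma Separates.symm' {G : SimpleGraph V} {S : Finset V} {u v : V}
    (h : Separates G S u v) : Separates G S v u := by
  obtain ⟨hu, hv, h⟩ := h
  refine ⟨hv, hu, fun p => ?_⟩
  obtain ⟨x, hx, hxS⟩ := h p.reverse
  refine ⟨x, ?_, hxS⟩
  simpa using hx

/-- `S` is a minimal `u`-`v` separator of `G`. -/
def MinSeparates (G : SimpleGraph V) (S : Finset V) (u v : V) : Prop :=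
  Separates G S u v ∧ ∀ S' : Finset V, S' ⊂ S → ¬ Separates G S' u v

lemma MinSeparates.symm' {G : SimpleGraph V} {S : Finset V} {u v : V}
    (h : MinSeparates G S u v) : MinSeparates G S v u :=
  ⟨h.1.symm', fun S' hS' hc => h.2 S' hS' hc.symm'⟩

/-- The clique graph `C(G)` of `G`: vertices are the maximal cliques; `K` and `K'` are
adjacent iff `K ∩ K'` is a minimal `u`-`v` separator for all `u ∈ K \ K'`, `v ∈ K' \ K`. -/
def cliqueGraph (G : SimpleGraph V) : SimpleGraph (CV G) where
  Adj K K' := K ≠ K' ∧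
    ∀ u ∈ K.1 \ K'.1, ∀ v ∈ K'.1 \ K.1, MinSeparates G (K.1 ∩ K'.1) u v
  symm := by
    constructor
    rintro K K' ⟨hne, h⟩
    refine ⟨hne.symm, fun u hu v hv => ?_⟩
    rw [Finset.inter_comm]
    exact (h v hv u hu).symm'
  loopless := by constructor; rintro K ⟨hne, -⟩; exact hne rfl

/-- A clique tree of `G`: a tree on the maximal cliques of `G` such that for every vertex
`v`, the maximal cliques containing `v` induce a connected subgraph (a subtree). -/
def IsCliqueTree (G : SimpleGraph V) (T : SimpleGraph (CV G)) : Prop :=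
  T.IsTree ∧ ∀ v : V, (T.induce {K : CV G | v ∈ K.1}).Connected

/-- `C(G) ⊖ S`: the clique graph with all edges labeled `S` deleted. -/
def deleteLabel (G : SimpleGraph V) (S : Finset V) : SimpleGraph (CV G) where
  Adj K K' := (cliqueGraph G).Adj K K' ∧ K.1 ∩ K'.1 ≠ S
  symm := by
    constructor
    rintro K K' ⟨h, hS⟩
    exact ⟨h.symm, by rwa [Finset.inter_comm]⟩
  loopless := by constructor; rintro K ⟨h, -⟩; exact (cliqueGraph G).irrefl h

/-- `w` is the minimum edge weight of `C(G)` (weights are `|K ∩ K'|`). -/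
def IsMinEdgeWeight (G : SimpleGraph V) (w : ℕ) : Prop :=
  (∃ K K' : CV G, (cliqueGraph G).Adj K K' ∧ (K.1 ∩ K'.1).card = w) ∧
    ∀ K K' : CV G, (cliqueGraph G).Adj K K' → w ≤ (K.1 ∩ K'.1).card

/-- `C(G)` with all edges of (minimum) weight `w` deleted; its connected components are
the units. -/
def unitGraph (G : SimpleGraph V) (w : ℕ) : SimpleGraph (CV G) where
  Adj K K' := (cliqueGraph G).Adj K K' ∧ (K.1 ∩ K'.1).card ≠ w
  symm := by
    constructor
    rintro K K' ⟨h, hw⟩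
    exact ⟨h.symm, by rwa [Finset.inter_comm]⟩
  loopless := by constructor; rintro K ⟨h, -⟩; exact (cliqueGraph G).irrefl h

/-- The type of units. -/
abbrev LUnit (G : SimpleGraph V) (w : ℕ) := (unitGraph G w).ConnectedComponent

/-- The unit containing a maximal clique `K`. -/
def umk (G : SimpleGraph V) (w : ℕ) (K : CV G) : LUnit G w :=
  (unitGraph G w).connectedComponentMk K

/-- The layer structure: units are its vertices; two units are adjacent iff some
edge of `C(G)` crosses them. -/
def layerGraph (G : SimpleGraph V) (w : ℕ) : SimpleGraph (LUnit G w) where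
  Adj U U' := U ≠ U' ∧ ∃ K K' : CV G,
    (cliqueGraph G).Adj K K' ∧ umk G w K = U ∧ umk G w K' = U'
  symm := by
    constructor
    rintro U U' ⟨hne, K, K', hadj, hK, hK'⟩
    exact ⟨hne.symm, K', K, hadj.symm, hK', hK⟩
  loopless := by constructor; rintro U ⟨hne, -⟩; exact hne rfl

/-- All edges of `C(G)` crossing `U` and `U'` have the label `S`. -/
def CrossLabel (G : SimpleGraph V) (w : ℕ) (U U' : LUnit G w) (S : Finset V) : Prop :=
  ∀ K K' : CV G, (cliqueGraph G).Adj K K' → umk G w K = U → umk G w K' = U' →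
    K.1 ∩ K'.1 = S

/-- `𝒱(U)`: the vertices of `G` contained in some maximal clique of the unit `U`. -/
def unitVerts (G : SimpleGraph V) (w : ℕ) (U : LUnit G w) : Set V :=
  {x | ∃ K : CV G, umk G w K = U ∧ x ∈ K.1}

/-- An MCS ordering of `G`: at each step, the visited vertex has the maximum number of
already visited neighbors among unvisited vertices. -/
def IsMCSOrdering (G : SimpleGraph V) (σ : Fin (Fintype.card V) ≃ V) : Prop :=
  ∀ i j : Fin (Fintype.card V), i ≤ j →
    (Finset.univ.filter fun l => l < i ∧ G.Adj (σ l) (σ j)).card ≤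
      (Finset.univ.filter fun l => l < i ∧ G.Adj (σ l) (σ i)).card

/-- A Prim ordering of `C(G)`: each vertex after the first is incident to an edge of
maximum weight among all edges between visited and unvisited vertices. -/
def IsPrimOrdering (G : SimpleGraph V) (π : Fin (Fintype.card (CV G)) ≃ CV G) : Prop :=
  ∀ i : Fin (Fintype.card (CV G)), 0 < (i : ℕ) →
    ∃ j, j < i ∧ (cliqueGraph G).Adj (π j) (π i) ∧
      ∀ j' k, j' < i → i ≤ k → (cliqueGraph G).Adj (π j') (π k) →
        ((π j').1 ∩ (π k).1).card ≤ ((π j).1 ∩ (π i).1).card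

/-- The position in `π` of the first maximal clique containing `x`. -/
noncomputable def firstIdx (G : SimpleGraph V)
    (π : Fin (Fintype.card (CV G)) ≃ CV G) (x : V) : ℕ :=
  sInf {j : ℕ | ∃ h : j < Fintype.card (CV G), x ∈ (π ⟨j, h⟩).1}

/-- `σ` is a generation of `π`. -/
def IsGeneration (G : SimpleGraph V) (π : Fin (Fintype.card (CV G)) ≃ CV G)
    (σ : Fin (Fintype.card V) ≃ V) : Prop :=
  ∀ x y : V, firstIdx G π x < firstIdx G π y → σ.symm x < σ.symm y

/-- `σ` is a linear extension of the relation `R`. -/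
def ExtendsR (R : V → V → Prop) (σ : Fin (Fintype.card V) ≃ V) : Prop :=
  ∀ x y : V, R x y → x ≠ y → σ.symm x < σ.symm y

/-- `π` respects `R`. -/
def RespectsR (G : SimpleGraph V) (R : V → V → Prop)
    (π : Fin (Fintype.card (CV G)) ≃ CV G) : Prop :=
  ∀ x y : V, R x y → x ≠ y → firstIdx G π x ≤ firstIdx G π y

/-- The set of vertices of `G` contained in one of the first `i` cliques of `π`. -/
def primPrefixVerts (G : SimpleGraph V) (π : Fin (Fintype.card (CV G)) ≃ CV G)
    (i : ℕ) : Set V :=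
  {x | ∃ j : Fin (Fintype.card (CV G)), (j : ℕ) < i ∧ x ∈ (π j).1}

/-! If the edge `KK'` had the minimum weight `w`, then `S = K ∩ K'` would be a separator with
`|S| = w`. Every edge `LL'` inside a unit has weight `> w`, so `L ∩ L'` has a vertex outside `S`;
following a walk from `K` to `K'` inside the unit through these vertices yields a walk of `G - S`
from `K \ K'` to `K' \ K`, which `S` should separate. -/

section CliqueWalks

variable {G : SimpleGraph V}

lemma exists_mem_sdiff_of_ne {K K' : CV G} (h : K ≠ K') : (K.1 \ K'.1).Nonempty :=
  Finset.sdiff_nonempty.2 fun hsub => h (Subtype.ext (K.2.2 K'.1 K'.2.1 hsub))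

lemma not_reachable_induce_compl_of_forall_walk {S : Finset V} {u v : V} (hu : u ∉ S)
    (hv : v ∉ S) (h : ∀ p : G.Walk u v, ∃ x ∈ p.support, x ∈ S) :
    ¬ (G.induce {z | z ∉ S}).Reachable ⟨u, hu⟩ ⟨v, hv⟩ := by
  rintro ⟨p⟩
  have hp : ∀ x ∈ (p.map (Embedding.induce _).toHom).support, x ∉ S := by
    simp only [Walk.support_map, List.mem_map]
    rintro _ ⟨z, -, rfl⟩
    exact z.2
  obtain ⟨x, hx, hxS⟩ := h (p.map (Embedding.induce _).toHom)
  exact hp x hx hxS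

lemma SimpleGraph.IsClique.reachable_induce_compl {K S : Finset V} (hK : G.IsClique (K : Set V)) {x y : V}
    (hx : x ∈ K) (hy : y ∈ K) (hxS : x ∉ S) (hyS : y ∉ S) :
    (G.induce {z | z ∉ S}).Reachable ⟨x, hxS⟩ ⟨y, hyS⟩ := by
  by_cases hxy : x = y
  · subst hxy
    rfl
  · exact Adj.reachable (by simpa using hK hx hy hxy)

lemma reachable_induce_compl_of_reachable {H : SimpleGraph (CV G)} {S : Finset V}
    (hH : ∀ L L', H.Adj L L' → ¬ L.1 ∩ L'.1 ⊆ S) {L M : CV G} (hLM : H.Reachable L M)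
    {x y : V} (hx : x ∈ L.1) (hy : y ∈ M.1) (hxS : x ∉ S) (hyS : y ∉ S) :
    (G.induce {z | z ∉ S}).Reachable ⟨x, hxS⟩ ⟨y, hyS⟩ := by
  obtain ⟨p⟩ := hLM
  induction p generalizing x with
  | @nil N => exact IsClique.reachable_induce_compl N.2.1 hx hy hxS hyS
  | @cons L₁ _ _ hadj _ ih =>
    obtain ⟨z, hz, hzS⟩ := Finset.not_subset.1 (hH _ _ hadj)
    exact (IsClique.reachable_induce_compl L₁.2.1 hx (Finset.mem_inter.1 hz).1 hxS hzS).trans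
      (ih (Finset.mem_inter.1 hz).2 hy hzS)

lemma unitGraph_adj_not_subset {w : ℕ}
    (hw : ∀ K K' : CV G, (cliqueGraph G).Adj K K' → w ≤ (K.1 ∩ K'.1).card) {S : Finset V}
    (hS : S.card = w) {L L' : CV G} (hLL' : (unitGraph G w).Adj L L') : ¬ L.1 ∩ L'.1 ⊆ S :=
  fun hsub => hLL'.2 (le_antisymm (hS ▸ Finset.card_le_card hsub) (hw L L' hLL'.1))

end CliqueWalks

theorem stmt5_general (G : SimpleGraph V)
    (w : ℕ) (hw : IsMinEdgeWeight G w) (K K' : CV G)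
    (hsame : umk G w K = umk G w K')
    (hadj : (cliqueGraph G).Adj K K') :
    w < (K.1 ∩ K'.1).card := by
  by_contra hle
  have hcard : (K.1 ∩ K'.1).card = w := le_antisymm (not_lt.1 hle) (hw.2 K K' hadj)
  obtain ⟨u, hu⟩ := exists_mem_sdiff_of_ne hadj.1
  obtain ⟨v, hv⟩ := exists_mem_sdiff_of_ne hadj.1.symm
  obtain ⟨huS, hvS, hsep⟩ := (hadj.2 u hu v hv).1
  exact not_reachable_induce_compl_of_forall_walk huS hvS hsep <|
    reachable_induce_compl_of_reachable (fun _ _ => unitGraph_adj_not_subset hw.2 hcard)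
      (ConnectedComponent.eq.1 hsame) (Finset.mem_sdiff.1 hu).1 (Finset.mem_sdiff.1 hv).1
      huS hvS

/-- an edge of `C(G)` whose endpoints lie in the same unit has weight
strictly greater than the minimum edge weight of `C(G)`. -/
theorem stmt5 (G : SimpleGraph V) (hG : G.Connected) (hch : IsChordal G)
    (w : ℕ) (hw : IsMinEdgeWeight G w) (K K' : CV G)
    (hsame : umk G w K = umk G w K')
    (hadj : (cliqueGraph G).Adj K K') :
    w < (K.1 ∩ K'.1).card :=
  stmt5_general G w hw K K' hsame hadj
end

section
/- Let G be a connected chordal graph and let U, U' be two distinct units of C(G). Then all edges of C(G) with one endpoint in U and the other in U' have the same label; that is, if K1K2 and K3K4 are edges of C(G) with K1,K3∈U and K2,K4∈U', then K1∩K2 = K3∩K4. -/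
open SimpleGraph

attribute [local instance] Classical.propDecidable
set_option linter.unusedSectionVars false

variable {V : Type*} [Fintype V] [DecidableEq V]

/-!
Let `S = K₃ ∩ K₄`. Both crossing edges have the minimum weight `w = |S|`, while every edge
inside a unit has weight `> w`, so it shares a vertex outside `S`. Hence all vertices outside
`S` of the cliques of one unit lie in a single component of `G - S`. If some `x ∈ K₁ ∩ K₂`
were outside `S`, it would join the component of `K₃ \ K₄` (unit `U`) to that of `K₄ \ K₃`
(unit `U'`), contradicting that `S` separates them. So `K₁ ∩ K₂ ⊆ S`, and the two sets have
the same size.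
-/

section UnitLabels

variable {G : SimpleGraph V}

lemma Separates.not_reachable_induce_compl {S : Finset V} {u v : V} (h : Separates G S u v) :
    ¬ (G.induce (↑S)ᶜ).Reachable ⟨u, h.1⟩ ⟨v, h.2.1⟩ := by
  rintro ⟨p⟩
  obtain ⟨x, hx, hxS⟩ := h.2.2 (p.map (Embedding.induce _).toHom)
  obtain ⟨y, -, rfl⟩ := List.mem_map.mp (Walk.support_map _ p ▸ hx)
  exact y.2 hxS

lemma reachable_induce_compl_of_mem_clique (K : CV G) {S : Finset V} {x y : V}
    (hx : x ∈ K.1) (hy : y ∈ K.1) (hxS : x ∉ S) (hyS : y ∉ S) :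
    (G.induce (↑S)ᶜ).Reachable ⟨x, hxS⟩ ⟨y, hyS⟩ := by
  obtain rfl | hxy := eq_or_ne x y
  · rfl
  · exact Adj.reachable (by simpa using K.2.1 hx hy hxy)

lemma sdiff_nonempty_of_cliqueGraph_adj {K K' : CV G} (h : (cliqueGraph G).Adj K K') :
    (K.1 \ K'.1).Nonempty := by
  rw [Finset.sdiff_nonempty]
  exact fun hsub => h.1 (Subtype.ext (K.2.2 K'.1 K'.2.1 hsub))

variable {w : ℕ}

lemma card_inter_eq_of_umk_ne {K K' : CV G} (h : (cliqueGraph G).Adj K K')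
    (hne : umk G w K ≠ umk G w K') : (K.1 ∩ K'.1).card = w := by
  by_contra hcard
  exact hne (ConnectedComponent.sound (Adj.reachable ⟨h, hcard⟩))

lemma exists_mem_inter_notMem_of_unitGraph_adj
    (hw : ∀ K K' : CV G, (cliqueGraph G).Adj K K' → w ≤ (K.1 ∩ K'.1).card)
    {S : Finset V} (hS : S.card ≤ w) {K K' : CV G} (h : (unitGraph G w).Adj K K') :
    ∃ a ∈ K.1 ∩ K'.1, a ∉ S :=
  Finset.exists_mem_notMem_of_card_lt_card
    (hS.trans_lt ((hw K K' h.1).lt_of_ne h.2.symm))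

lemma reachable_induce_compl_of_umk_eq
    (hw : ∀ K K' : CV G, (cliqueGraph G).Adj K K' → w ≤ (K.1 ∩ K'.1).card)
    {S : Finset V} (hS : S.card ≤ w) {K K' : CV G} (hKK' : umk G w K = umk G w K')
    {x y : V} (hx : x ∈ K.1) (hy : y ∈ K'.1) (hxS : x ∉ S) (hyS : y ∉ S) :
    (G.induce (↑S)ᶜ).Reachable ⟨x, hxS⟩ ⟨y, hyS⟩ := by
  obtain ⟨p⟩ := ConnectedComponent.exact hKK'
  clear hKK'
  induction p generalizing x with
  | nil => exact reachable_induce_compl_of_mem_clique _ hx hy hxS hyS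
  | cons h _ ih =>
    obtain ⟨a, ha, haS⟩ := exists_mem_inter_notMem_of_unitGraph_adj hw hS h
    rw [Finset.mem_inter] at ha
    exact (reachable_induce_compl_of_mem_clique _ hx ha.1 hxS haS).trans
      (ih ha.2 hy haS)

end UnitLabels

theorem stmt6_general (G : SimpleGraph V)
    (w : ℕ) (hw : IsMinEdgeWeight G w) (K1 K2 K3 K4 : CV G)
    (h12 : (cliqueGraph G).Adj K1 K2) (h34 : (cliqueGraph G).Adj K3 K4)
    (hU : umk G w K1 = umk G w K3) (hU' : umk G w K2 = umk G w K4)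
    (hUU' : umk G w K1 ≠ umk G w K2) :
    K1.1 ∩ K2.1 = K3.1 ∩ K4.1 := by
  have hS : (K3.1 ∩ K4.1).card = w := card_inter_eq_of_umk_ne h34 (hU ▸ hU' ▸ hUU')
  obtain ⟨u, hu⟩ := sdiff_nonempty_of_cliqueGraph_adj h34
  obtain ⟨v, hv⟩ := sdiff_nonempty_of_cliqueGraph_adj h34.symm
  have hsep := (h34.2 u hu v hv).1
  have hsub : K1.1 ∩ K2.1 ⊆ K3.1 ∩ K4.1 := by
    intro x hx
    by_contra hxS
    rw [Finset.mem_inter] at hx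
    have hux := reachable_induce_compl_of_umk_eq hw.2 hS.le hU.symm
      (Finset.mem_sdiff.mp hu).1 hx.1 hsep.1 hxS
    have hvx := reachable_induce_compl_of_umk_eq hw.2 hS.le hU'.symm
      (Finset.mem_sdiff.mp hv).1 hx.2 hsep.2.1 hxS
    exact hsep.not_reachable_induce_compl (hux.trans hvx.symm)
  exact Finset.eq_of_subset_of_card_le hsub (by rw [hS, card_inter_eq_of_umk_ne h12 hUU'])

/-- all edges of `C(G)` crossing two fixed distinct units have the same
label. -/
theorem stmt6 (G : SimpleGraph V) (hG : G.Connected) (hch : IsChordal G)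
    (w : ℕ) (hw : IsMinEdgeWeight G w) (K1 K2 K3 K4 : CV G)
    (h12 : (cliqueGraph G).Adj K1 K2) (h34 : (cliqueGraph G).Adj K3 K4)
    (hU : umk G w K1 = umk G w K3) (hU' : umk G w K2 = umk G w K4)
    (hUU' : umk G w K1 ≠ umk G w K2) :
    K1.1 ∩ K2.1 = K3.1 ∩ K4.1 :=
  stmt6_general G w hw K1 K2 K3 K4 h12 h34 hU hU' hUU'
end
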